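/- arXiv:1908.11227 — 3 statements merged into one kernel-verified Lean document; each statement's English description precedes it below -/
import Mathlib

section
/- In 256-bit unsigned modular arithmetic, the multiplication safety check used by VeriSmart is correct: for a b : ZMod (2^256), the product does not overflow (i.e., (a * b).val = a.val * b.val) if and only if a = 0 or (a ≠ 0 and truncated division of (a*b) by a, computed on representatives, equals b), i.e., a = 0 ∨ (a ≠ 0 ∧ (a * b).val / a.val = b.val). -/
theorem stmt_2 (a b : ZMod (2^256)) :
    (a * b).val = a.val * b.val ↔
      a = 0 ∨ (a ≠ 0 ∧ (a * b).val / a.val = b.val) := by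
  constructor
  · intro h
    by_cases ha : a = 0
    · exact Or.inl ha
    · refine Or.inr ⟨ha, ?_⟩
      rw [h]
      exact Nat.mul_div_cancel_left b.val (Nat.pos_of_ne_zero
        (fun h0 => ha ((ZMod.val_eq_zero a).mp h0)))
  · rintro (rfl | ⟨ha, hd⟩)
    · simp
    · have hmul : (a * b).val = (a.val * b.val) % 2^256 := ZMod.val_mul a b
      have h1 : a.val * b.val ≤ (a * b).val := by
        calc a.val * b.val = a.val * ((a * b).val / a.val) := by rw [hd]
        _ ≤ (a * b).val := Nat.mul_div_le (a*b).val a.val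
      have h2 : (a * b).val ≤ a.val * b.val := hmul ▸ Nat.mod_le _ _
      omega
end

section
/- The CVE-2018-13326 report is incorrect: define State as a pair (balance : A → ℕ) over a finite address type A, with initial state balance₀ assigning 10000 to one distinguished address and 0 elsewhere. Transactions are: transfer(s, t, v), applicable when balance s ≥ v, producing Function.update (Function.update balance s (balance s − v)) t ((Function.update balance s (balance s − v)) t + v); and transferFrom(f, t, v), applicable when balance f ≥ v, producing Function.update (Function.update balance t (balance t + v)) f ((Function.update balance t (balance t + v)) f − v). Then for any state reachable from balance₀ by a finite sequence of applicable transactions, ∑_{i ∈ A} balance i = 10000, and consequently every addition performed in any applicable transaction from a reachable state has both operands ≤ 10000 and thus never overflows 2^256. -/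
def btxTransfer {A : Type} [DecidableEq A] (b : A → ℕ) (s t : A) (v : ℕ) : A → ℕ :=
  Function.update (Function.update b s (b s - v)) t
    ((Function.update b s (b s - v)) t + v)

def btxTransferFrom {A : Type} [DecidableEq A] (b : A → ℕ) (f t : A) (v : ℕ) : A → ℕ :=
  Function.update (Function.update b t (b t + v)) f
    ((Function.update b t (b t + v)) f - v)

inductive btxReachable {A : Type} [DecidableEq A] (b₀ : A → ℕ) : (A → ℕ) → Prop
  | init : btxReachable b₀ b₀
  | transfer {b : A → ℕ} {s t : A} {v : ℕ} :
      btxReachable b₀ b → b s ≥ v → btxReachable b₀ (btxTransfer b s t v)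
  | transferFrom {b : A → ℕ} {f t : A} {v : ℕ} :
      btxReachable b₀ b → b f ≥ v → btxReachable b₀ (btxTransferFrom b f t v)

lemma sum_two_update {A : Type} [Fintype A] [DecidableEq A] (b : A → ℕ) (s t : A)
    (hst : s ≠ t) (x y : ℕ) :
    ∑ i, Function.update (Function.update b s x) t y i
      = y + (x + ∑ i ∈ (Finset.univ.erase t).erase s, b i) := by
  rw [Finset.sum_update_of_mem (Finset.mem_univ t), Finset.sdiff_singleton_eq_erase]
  congr 1
  rw [Finset.sum_update_of_mem (Finset.mem_erase.mpr ⟨hst, Finset.mem_univ s⟩),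
    Finset.sdiff_singleton_eq_erase]

lemma sum_decomp {A : Type} [Fintype A] [DecidableEq A] (b : A → ℕ) (s t : A)
    (hst : s ≠ t) :
    ∑ i, b i = b t + (b s + ∑ i ∈ (Finset.univ.erase t).erase s, b i) := by
  have h := sum_two_update b s t hst (b s) (b t)
  simpa [Function.update_eq_self, Function.update_of_ne hst] using h

lemma sum_transfer {A : Type} [Fintype A] [DecidableEq A] (b : A → ℕ) (s t : A)
    (v : ℕ) (hv : b s ≥ v) : ∑ i, btxTransfer b s t v i = ∑ i, b i := by
  by_cases hst : s = t
  · subst hst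
    have : btxTransfer b s s v = b := by
      unfold btxTransfer
      rw [Function.update_idem, Function.update_self]
      rw [Nat.sub_add_cancel hv, Function.update_eq_self]
    rw [this]
  · unfold btxTransfer
    rw [Function.update_of_ne (Ne.symm hst)]
    rw [sum_two_update b s t hst, sum_decomp b s t hst]
    omega

lemma sum_transferFrom {A : Type} [Fintype A] [DecidableEq A] (b : A → ℕ) (f t : A)
    (v : ℕ) (hv : b f ≥ v) : ∑ i, btxTransferFrom b f t v i = ∑ i, b i := by
  by_cases hft : f = t
  · subst hft
    have : btxTransferFrom b f f v = b := by
      unfold btxTransferFrom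
      rw [Function.update_idem, Function.update_self]
      rw [Nat.add_sub_cancel, Function.update_eq_self]
    rw [this]
  · unfold btxTransferFrom
    rw [Function.update_of_ne hft]
    rw [sum_two_update b t f (Ne.symm hft), sum_decomp b t f (Ne.symm hft)]
    omega

theorem stmt_10 {A : Type} [Fintype A] [DecidableEq A] (a₀ : A)
    (b₀ : A → ℕ) (hb₀ : b₀ = Function.update (fun _ => 0) a₀ 10000) :
    ∀ b : A → ℕ, btxReachable b₀ b →
      (∑ i, b i = 10000) ∧
      -- every addition in any applicable transaction from b has operands ≤ 10000,
      -- hence never overflows 2^256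
      (∀ s t : A, ∀ v : ℕ, b s ≥ v →
        (Function.update b s (b s - v)) t ≤ 10000 ∧ v ≤ 10000 ∧
        (Function.update b s (b s - v)) t + v < 2^256) ∧
      (∀ f t : A, ∀ v : ℕ, b f ≥ v →
        b t ≤ 10000 ∧ v ≤ 10000 ∧ b t + v < 2^256) := by
  intro b hb
  have hsum : ∑ i, b i = 10000 := by
    induction hb with
    | init =>
        subst hb₀
        rw [Finset.sum_update_of_mem (Finset.mem_univ a₀)]
        simp
    | transfer hr hv ih => rw [sum_transfer _ _ _ _ hv, ih]
    | transferFrom hr hv ih => rw [sum_transferFrom _ _ _ _ hv, ih]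
  have hle : ∀ i : A, b i ≤ 10000 := by
    intro i
    rw [← hsum]
    exact Finset.single_le_sum (fun j _ => Nat.zero_le _) (Finset.mem_univ i)
  refine ⟨hsum, ?_, ?_⟩
  · intro s t v hv
    have h1 : (Function.update b s (b s - v)) t ≤ 10000 := by
      by_cases hst : s = t
      · subst hst; rw [Function.update_self]; exact le_trans (Nat.sub_le _ _) (hle s)
      · rw [Function.update_of_ne (Ne.symm hst)]; exact hle t
    have h2 : v ≤ 10000 := le_trans hv (hle s)
    exact ⟨h1, h2, by have : (2:ℕ)^256 > 20000 := by norm_num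
                      omega⟩
  · intro f t v hv
    have h2 : v ≤ 10000 := le_trans hv (hle f)
    exact ⟨hle t, h2, by have : (2:ℕ)^256 > 20000 := by norm_num
                         have := hle t
                         omega⟩
end

section
/- The free-variable necessary condition for implication: with formulas modeled as predicates on assignments (V → D) that depend only on their free-variable sets, if p → q is valid (every assignment satisfying p satisfies q), p is satisfiable, and every variable in FV(q) \ FV(p) is nontrivial for q in the sense of condition (iii) of Proposition 1, then FV(q) ⊆ FV(p) ∪ (trivial variables of q); in particular, if additionally FV(q) \ FV(p) is nonempty and consists only of nontrivial variables, we reach a contradiction — i.e., validity of p → q together with satisfiability of p forces FV(q) \ FV(p) to contain no nontrivial variable of q. -/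
theorem stmt_12 {V D : Type} [Nonempty D] [DecidableEq V]
    (p q : (V → D) → Prop) (FVp FVq : Set V)
    (hpFV : ∀ I J : V → D, (∀ v ∈ FVp, I v = J v) → (p I ↔ p J))
    (hqFV : ∀ I J : V → D, (∀ v ∈ FVq, I v = J v) → (q I ↔ q J))
    (hvalid : ∀ I : V → D, p I → q I)
    (hsat : ∃ I : V → D, p I) :
    ∀ x ∈ FVq \ FVp,
      ¬ (∀ I : V → D, q I →
          ∃ v : D, v ≠ I x ∧ ¬ q (Function.update I x v)) := by
  rintro x ⟨hxq, hxp⟩ hnt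
  obtain ⟨I, hI⟩ := hsat
  obtain ⟨v, _, hnq⟩ := hnt I (hvalid I hI)
  apply hnq
  apply hvalid
  rw [← hpFV I (Function.update I x v)]
  · exact hI
  · intro w hw
    rw [Function.update_of_ne]
    rintro rfl; exact hxp hw
end
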